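/- Let q₀, q₁, p₀, p₁, q̃₀, q̃₁, p̃₀, p̃₁ ∈ ℍ with q₁, p₀, q̃₁, p̃₀ invertible. Suppose q₀p₀ + q₁p₁ ∈ ℝ∖{0}, q̃₀p̃₀ + q̃₁p̃₁ ∈ ℝ∖{0}, q₁⁻¹q₀ = q̃₁⁻¹q̃₀, and p₁p₀⁻¹ = p̃₁p̃₀⁻¹. Then there exist u ∈ ℍ∖{0} and r ∈ ℝ∖{0} such that q̃₀ = uq₀, q̃₁ = uq₁, p̃₀ = r·p₀u⁻¹, and p̃₁ = r·p₁u⁻¹. -/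
import Mathlib


/-- Let `q₀,q₁,p₀,p₁,q̃₀,q̃₁,p̃₀,p̃₁ ∈ ℍ` with `q₁,p₀,q̃₁,p̃₀` invertible.  If
`q₀p₀ + q₁p₁` and `q̃₀p̃₀ + q̃₁p̃₁` are nonzero reals, `q₁⁻¹q₀ = q̃₁⁻¹q̃₀` and
`p₁p₀⁻¹ = p̃₁p̃₀⁻¹`, then there are `u ∈ ℍ∖{0}` and `r ∈ ℝ∖{0}` with
`q̃₀ = uq₀`, `q̃₁ = uq₁`, `p̃₀ = r·p₀u⁻¹`, `p̃₁ = r·p₁u⁻¹`. -/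
theorem fibre_is_single_orbit
    (q₀ q₁ p₀ p₁ q₀' q₁' p₀' p₁' : Quaternion ℝ)
    (hq₁ : q₁ ≠ 0) (hp₀ : p₀ ≠ 0) (hq₁' : q₁' ≠ 0) (hp₀' : p₀' ≠ 0)
    (hreal : ∃ s : ℝ, s ≠ 0 ∧ q₀ * p₀ + q₁ * p₁ = (s : Quaternion ℝ))
    (hreal' : ∃ s : ℝ, s ≠ 0 ∧ q₀' * p₀' + q₁' * p₁' = (s : Quaternion ℝ))
    (hq : q₁⁻¹ * q₀ = q₁'⁻¹ * q₀')
    (hp : p₁ * p₀⁻¹ = p₁' * p₀'⁻¹) :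
    ∃ (u : Quaternion ℝ) (r : ℝ), u ≠ 0 ∧ r ≠ 0 ∧
      q₀' = u * q₀ ∧ q₁' = u * q₁ ∧
      p₀' = (r : Quaternion ℝ) * (p₀ * u⁻¹) ∧ p₁' = (r : Quaternion ℝ) * (p₁ * u⁻¹) := by
  obtain ⟨s, hs, hsum⟩ := hreal
  obtain ⟨s', hs', hsum'⟩ := hreal'
  set u := q₁' * q₁⁻¹ with hu_def
  have hu : u ≠ 0 := mul_ne_zero hq₁' (inv_ne_zero hq₁)
  have hq0 : q₀' = u * q₀ := by
    rw [hu_def, mul_assoc, hq, ← mul_assoc, mul_inv_cancel₀ hq₁', one_mul]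
  have hq1 : q₁' = u * q₁ := by
    rw [hu_def, mul_assoc, inv_mul_cancel₀ hq₁, mul_one]
  have hp1 : p₁' = p₁ * p₀⁻¹ * p₀' := by
    rw [hp, mul_assoc, inv_mul_cancel₀ hp₀', mul_one]
  have h1 : q₀ + q₁ * (p₁ * p₀⁻¹) = (s : Quaternion ℝ) * p₀⁻¹ := by
    have := congrArg (· * p₀⁻¹) hsum
    simpa [add_mul, mul_assoc, mul_inv_cancel₀ hp₀] using this
  have key : (s : Quaternion ℝ) * (u * p₀⁻¹ * p₀') = (s' : Quaternion ℝ) := by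
    calc (s : Quaternion ℝ) * (u * p₀⁻¹ * p₀')
        = u * ((s : Quaternion ℝ) * p₀⁻¹ * p₀') := by
          simp only [Quaternion.coe_mul_eq_smul, smul_mul_assoc, mul_smul_comm, mul_assoc]
      _ = u * ((q₀ + q₁ * (p₁ * p₀⁻¹)) * p₀') := by rw [h1]
      _ = q₀' * p₀' + q₁' * p₁' := by
          rw [hq0, hq1, hp1, add_mul, mul_add]
          simp [mul_assoc]
      _ = (s' : Quaternion ℝ) := hsum'
  have hsQ : (s : Quaternion ℝ) ≠ 0 := by
    exact_mod_cast (Quaternion.coe_injective.ne_iff.mpr hs)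
  have h2 : u * p₀⁻¹ * p₀' = ((s'/s : ℝ) : Quaternion ℝ) := by
    apply mul_left_cancel₀ hsQ
    rw [key, ← Quaternion.coe_mul]
    field_simp
  have hp0' : p₀' = ((s'/s : ℝ) : Quaternion ℝ) * (p₀ * u⁻¹) := by
    have : p₀ * u⁻¹ * (u * p₀⁻¹ * p₀') = p₀' := by
      rw [mul_assoc u, mul_assoc p₀, ← mul_assoc u⁻¹, inv_mul_cancel₀ hu,
        one_mul, ← mul_assoc, mul_inv_cancel₀ hp₀, one_mul]
    rw [← this, h2, Quaternion.coe_commutes]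
  refine ⟨u, s' / s, hu, div_ne_zero hs' hs, hq0, hq1, hp0', ?_⟩
  rw [hp1, hp0', Quaternion.coe_commutes _ (p₀ * u⁻¹),
    Quaternion.coe_commutes _ (p₁ * u⁻¹), ← mul_assoc (p₁ * p₀⁻¹),
    mul_assoc p₁, inv_mul_cancel_left₀ hp₀]
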